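/- arXiv:2106.00861 — 2 statements merged into one kernel-verified Lean document; each statement's English description precedes it below -/
import Mathlib

section
/- Let i, j, k : Fin n_v → ℤ/N with i 0 = j 0 = k 0 = 0, and let H be the 4×n_v polynomial-circulant parity-check matrix with rows (x⁰), (x^{i_l}), (x^{j_l}), (x^{k_l}). The Tanner graph of H has no 4-cycle if and only if each of the six families (i_l), (j_l), (k_l), (i_l − j_l), (i_l − k_l), (j_l − k_l), l ∈ Fin n_v, consists of pairwise distinct elements of ℤ/N. -/
def tanner {α β : Type*} (H : α → β → ℕ) : SimpleGraph (α ⊕ β) :=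
  SimpleGraph.fromRel (fun u v => ∃ i j, u = Sum.inl i ∧ v = Sum.inr j ∧ H i j = 1)

def hasFourCycle {V : Type*} (G : SimpleGraph V) : Prop :=
  ∃ (v : V) (w : G.Walk v v), w.IsCycle ∧ w.length = 4

lemma tanner_adj {α β : Type*} (H : α → β → ℕ) (u v : α ⊕ β) :
    (tanner H).Adj u v ↔ ∃ a b, H a b = 1 ∧
      ((u = Sum.inl a ∧ v = Sum.inr b) ∨ (u = Sum.inr b ∧ v = Sum.inl a)) := by
  simp only [tanner, SimpleGraph.fromRel_adj]
  constructor
  · rintro ⟨hne, (⟨a, b, rfl, rfl, h⟩ | ⟨a, b, rfl, rfl, h⟩)⟩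
    · exact ⟨a, b, h, Or.inl ⟨rfl, rfl⟩⟩
    · exact ⟨a, b, h, Or.inr ⟨rfl, rfl⟩⟩
  · rintro ⟨a, b, h, (⟨rfl, rfl⟩ | ⟨rfl, rfl⟩)⟩
    · exact ⟨by simp, Or.inl ⟨a, b, rfl, rfl, h⟩⟩
    · exact ⟨by simp, Or.inr ⟨a, b, rfl, rfl, h⟩⟩

lemma hasFourCycle_tanner_iff {α β : Type*} (H : α → β → ℕ) :
    hasFourCycle (tanner H) ↔ ∃ a a' b b', a ≠ a' ∧ b ≠ b' ∧
      H a b = 1 ∧ H a' b = 1 ∧ H a b' = 1 ∧ H a' b' = 1 := by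
  constructor
  · rintro ⟨v, w, hcyc, hlen⟩
    cases w with
    | nil => simp at hlen
    | cons h1 w =>
    cases w with
    | nil => simp at hlen
    | cons h2 w =>
    cases w with
    | nil => simp at hlen
    | cons h3 w =>
    cases w with
    | nil => simp at hlen
    | cons h4 w =>
    cases w with
    | cons h5 w => simp [SimpleGraph.Walk.length_cons] at hlen
    | nil =>
    rename_i p q r
    -- walk: v ~ p ~ q ~ r ~ v
    have hnd := hcyc.2
    simp [List.nodup_cons] at hnd
    rw [tanner_adj] at h1 h2 h3 h4
    obtain ⟨a1, b1, H1, (⟨e1, e2⟩ | ⟨e1, e2⟩)⟩ := h1 <;>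
      obtain ⟨a2, b2, H2, (⟨e3, e4⟩ | ⟨e3, e4⟩)⟩ := h2 <;>
        obtain ⟨a3, b3, H3, (⟨e5, e6⟩ | ⟨e5, e6⟩)⟩ := h3 <;>
          obtain ⟨a4, b4, H4, (⟨e7, e8⟩ | ⟨e7, e8⟩)⟩ := h4 <;>
            subst_vars <;> simp_all
    · exact ⟨a3, a4, hnd.2, b2, b4, hnd.1, H2, H1, H3, H4⟩
    · exact ⟨a2, a4, hnd.1, b3, b4, hnd.2, H2, H3, H1, H4⟩
  · rintro ⟨a, a', b, b', ha, hb, h1, h2, h3, h4⟩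
    have adj1 : (tanner H).Adj (Sum.inl a) (Sum.inr b) :=
      (tanner_adj H _ _).2 ⟨a, b, h1, Or.inl ⟨rfl, rfl⟩⟩
    have adj2 : (tanner H).Adj (Sum.inr b) (Sum.inl a') :=
      (tanner_adj H _ _).2 ⟨a', b, h2, Or.inr ⟨rfl, rfl⟩⟩
    have adj3 : (tanner H).Adj (Sum.inl a') (Sum.inr b') :=
      (tanner_adj H _ _).2 ⟨a', b', h4, Or.inl ⟨rfl, rfl⟩⟩
    have adj4 : (tanner H).Adj (Sum.inr b') (Sum.inl a) :=
      (tanner_adj H _ _).2 ⟨a, b', h3, Or.inr ⟨rfl, rfl⟩⟩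
    refine ⟨Sum.inl a, .cons adj1 (.cons adj2 (.cons adj3 (.cons adj4 .nil))), ?_, rfl⟩
    rw [SimpleGraph.Walk.isCycle_def]
    refine ⟨?_, by simp, ?_⟩
    · simp [List.nodup_cons, Sym2.eq_iff, ha, hb, Ne.symm ha, Ne.symm hb]
    · simp [List.nodup_cons, ha, hb, Ne.symm ha, Ne.symm hb]

theorem girth_gt_four_iff_six_families_distinct (N n_v : ℕ) [NeZero N] [NeZero n_v]
    (i j k : Fin n_v → ZMod N)
    (hi0 : i 0 = 0) (hj0 : j 0 = 0) (hk0 : k 0 = 0) :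
    let e : Fin 4 → Fin n_v → ZMod N := ![fun _ => 0, i, j, k]
    let H : (Fin 4 × ZMod N) → (Fin n_v × ZMod N) → ℕ :=
      fun p q => if q.2 = p.2 + e p.1 q.1 then 1 else 0
    (¬ hasFourCycle (tanner H)) ↔
      (Function.Injective i ∧ Function.Injective j ∧ Function.Injective k ∧
       Function.Injective (fun l => i l - j l) ∧
       Function.Injective (fun l => i l - k l) ∧
       Function.Injective (fun l => j l - k l)) := by
  intro e H
  have e0 : e 0 = fun _ => 0 := rfl
  have e1 : e 1 = i := rfl
  have e2 : e 2 = j := rfl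
  have e3 : e 3 = k := rfl
  have hHd : ∀ p q, H p q = 1 ↔ q.2 = p.2 + e p.1 q.1 := by
    intro p q
    show (if q.2 = p.2 + e p.1 q.1 then 1 else 0) = 1 ↔ _
    split <;> simp_all
  rw [hasFourCycle_tanner_iff]
  constructor
  · intro hno
    have key : ∀ s s' : Fin 4, s ≠ s' →
        Function.Injective (fun l => e s l - e s' l) := by
      intro s s' hss l l' hll
      by_contra hne
      refine hno ⟨(s, 0), (s', e s l - e s' l), (l, e s l), (l', e s l'), ?_, ?_,
        ?_, ?_, ?_, ?_⟩
      · simp [Prod.ext_iff, hss]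
      · simp [Prod.ext_iff, hne]
      · rw [hHd]; simp
      · rw [hHd]; simp
      · rw [hHd]; simp
      · rw [hHd]; simp only
        have : e s l - e s' l = e s l' - e s' l' := hll
        linear_combination -this
    refine ⟨?_, ?_, ?_, ?_, ?_, ?_⟩
    · intro a b hab
      exact key 1 0 (by decide) (show e 1 a - e 0 a = e 1 b - e 0 b by
        rw [e0, e1]; simpa using hab)
    · intro a b hab
      exact key 2 0 (by decide) (show e 2 a - e 0 a = e 2 b - e 0 b by
        rw [e0, e2]; simpa using hab)
    · intro a b hab
      exact key 3 0 (by decide) (show e 3 a - e 0 a = e 3 b - e 0 b by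
        rw [e0, e3]; simpa using hab)
    · intro a b hab
      exact key 1 2 (by decide) (show e 1 a - e 2 a = e 1 b - e 2 b by
        rw [e1, e2]; simpa using hab)
    · intro a b hab
      exact key 1 3 (by decide) (show e 1 a - e 3 a = e 1 b - e 3 b by
        rw [e1, e3]; simpa using hab)
    · intro a b hab
      exact key 2 3 (by decide) (show e 2 a - e 3 a = e 2 b - e 3 b by
        rw [e2, e3]; simpa using hab)
  · rintro ⟨hi, hj, hk, hij, hik, hjk⟩
      ⟨⟨s, y⟩, ⟨s', y'⟩, ⟨l, z⟩, ⟨l', z'⟩, hpp, hqq, E1, E2, E3, E4⟩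
    rw [hHd] at E1 E2 E3 E4
    simp only at E1 E2 E3 E4
    have hs : s ≠ s' := by
      rintro rfl
      apply hpp
      have : y = y' := by
        have := E1.symm.trans E2
        exact (add_right_cancel this)
      simp [this]
    have hl : l ≠ l' := by
      rintro rfl
      apply hqq
      have : z = z' := E1.trans E3.symm
      simp [this]
    have hdiff : e s l - e s' l = e s l' - e s' l' := by
      have h1 : y + e s l = y' + e s' l := by linear_combination E1.symm + E2
      have h2 : y + e s l' = y' + e s' l' := by linear_combination E3.symm + E4
      linear_combination h1 - h2
    apply hl
    fin_cases s <;> fin_cases s'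
    · exact absurd rfl hs
    · have hd : (0 : ZMod N) - i l = (0 : ZMod N) - i l' := hdiff
      exact hi (by linear_combination -hd)
    · have hd : (0 : ZMod N) - j l = (0 : ZMod N) - j l' := hdiff
      exact hj (by linear_combination -hd)
    · have hd : (0 : ZMod N) - k l = (0 : ZMod N) - k l' := hdiff
      exact hk (by linear_combination -hd)
    · have hd : i l - (0 : ZMod N) = i l' - (0 : ZMod N) := hdiff
      exact hi (by linear_combination hd)
    · exact absurd rfl hs
    · have hd : i l - j l = i l' - j l' := hdiff
      exact hij hd
    · have hd : i l - k l = i l' - k l' := hdiff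
      exact hik hd
    · have hd : j l - (0 : ZMod N) = j l' - (0 : ZMod N) := hdiff
      exact hj (by linear_combination hd)
    · have hd : j l - i l = j l' - i l' := hdiff
      exact hij (by linear_combination -hd)
    · exact absurd rfl hs
    · have hd : j l - k l = j l' - k l' := hdiff
      exact hjk hd
    · have hd : k l - (0 : ZMod N) = k l' - (0 : ZMod N) := hdiff
      exact hk (by linear_combination hd)
    · have hd : k l - i l = k l' - i l' := hdiff
      exact hik (by linear_combination -hd)
    · have hd : k l - j l = k l' - j l' := hdiff
      exact hjk (by linear_combination -hd)
    · exact absurd rfl hs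
end

section
/- For the multiplicative-type array e_{s,l} = (s−1)(l−1) mod N with s ∈ {1,…,n_c}, l ∈ {1,…,n_v}, the Tanner graph has no 4-cycle if and only if (s−s')(l−l') ≢ 0 (mod N) for all 1 ≤ s ≠ s' ≤ n_c and 1 ≤ l ≠ l' ≤ n_v. In particular, if N is prime and N ≥ max(n_c, n_v), the girth exceeds 4. -/
namespace MAux

variable {N n_c n_v : ℕ} [NeZero N]

def Hm (N n_c n_v : ℕ) [NeZero N] : (Fin n_c × ZMod N) → (Fin n_v × ZMod N) → ℕ :=
  fun p q => if q.2 = p.2 + ((p.1 : ℕ) : ZMod N) * ((q.1 : ℕ) : ZMod N) then 1 else 0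

lemma adj_iff {u v : (Fin n_c × ZMod N) ⊕ (Fin n_v × ZMod N)} :
    (tanner (Hm N n_c n_v)).Adj u v ↔
      ((∃ p q, u = Sum.inl p ∧ v = Sum.inr q ∧
          q.2 = p.2 + ((p.1 : ℕ) : ZMod N) * ((q.1 : ℕ) : ZMod N)) ∨
       (∃ p q, v = Sum.inl p ∧ u = Sum.inr q ∧
          q.2 = p.2 + ((p.1 : ℕ) : ZMod N) * ((q.1 : ℕ) : ZMod N))) := by
  constructor
  · rintro ⟨-, h⟩
    simpa [Hm, ite_eq_iff] using h
  · rintro (⟨p, q, rfl, rfl, h⟩ | ⟨p, q, rfl, rfl, h⟩)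
    · exact ⟨by simp, Or.inl ⟨p, q, rfl, rfl, by simp [Hm, h]⟩⟩
    · exact ⟨by simp, Or.inr ⟨p, q, rfl, rfl, by simp [Hm, h]⟩⟩

lemma cycle_of (s s' : Fin n_c) (l l' : Fin n_v) (hs : s ≠ s') (hl : l ≠ l')
    (h : (((s : ℕ) : ZMod N) - ((s' : ℕ) : ZMod N)) *
        (((l : ℕ) : ZMod N) - ((l' : ℕ) : ZMod N)) = 0) :
    hasFourCycle (tanner (Hm N n_c n_v)) := by
  set a : ZMod N := ((s : ℕ) : ZMod N) with ha
  set b : ZMod N := ((s' : ℕ) : ZMod N) with hb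
  set c : ZMod N := ((l : ℕ) : ZMod N) with hc
  set d : ZMod N := ((l' : ℕ) : ZMod N) with hd
  have h01 : (tanner (Hm N n_c n_v)).Adj (Sum.inl (s, (0 : ZMod N))) (Sum.inr (l, a * c)) :=
    adj_iff.mpr (Or.inl ⟨(s, 0), (l, a * c), rfl, rfl, by ring⟩)
  have h12 : (tanner (Hm N n_c n_v)).Adj (Sum.inr (l, a * c)) (Sum.inl (s', a * c - b * c)) :=
    adj_iff.mpr (Or.inr ⟨(s', a * c - b * c), (l, a * c), rfl, rfl, by ring⟩)
  have h23 : (tanner (Hm N n_c n_v)).Adj (Sum.inl (s', a * c - b * c)) (Sum.inr (l', a * d)) :=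
    adj_iff.mpr (Or.inl ⟨(s', a * c - b * c), (l', a * d), rfl, rfl, by
      show a * d = (a * c - b * c) + b * d
      linear_combination -h⟩)
  have h30 : (tanner (Hm N n_c n_v)).Adj (Sum.inr (l', a * d)) (Sum.inl (s, (0 : ZMod N))) :=
    adj_iff.mpr (Or.inr ⟨(s, 0), (l', a * d), rfl, rfl, by ring⟩)
  refine ⟨_, SimpleGraph.Walk.cons h01 (SimpleGraph.Walk.cons h12
    (SimpleGraph.Walk.cons h23 (SimpleGraph.Walk.cons h30 SimpleGraph.Walk.nil))), ?_, rfl⟩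
  rw [SimpleGraph.Walk.isCycle_def]
  refine ⟨?_, by simp, ?_⟩
  · rw [SimpleGraph.Walk.isTrail_def]
    simp [Sym2.eq, Sym2.rel_iff', hs, hl, hs.symm, hl.symm, Prod.ext_iff]
  · simp [hs, hl, hs.symm, hl.symm, Prod.ext_iff]

lemma core (p0 p2 : Fin n_c × ZMod N) (q1 q3 : Fin n_v × ZMod N)
    (hp : p0 ≠ p2) (hq : q1 ≠ q3)
    (e1 : q1.2 = p0.2 + ((p0.1 : ℕ) : ZMod N) * ((q1.1 : ℕ) : ZMod N))
    (e2 : q1.2 = p2.2 + ((p2.1 : ℕ) : ZMod N) * ((q1.1 : ℕ) : ZMod N))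
    (e3 : q3.2 = p2.2 + ((p2.1 : ℕ) : ZMod N) * ((q3.1 : ℕ) : ZMod N))
    (e4 : q3.2 = p0.2 + ((p0.1 : ℕ) : ZMod N) * ((q3.1 : ℕ) : ZMod N)) :
    ∃ s s' : Fin n_c, ∃ l l' : Fin n_v, s ≠ s' ∧ l ≠ l' ∧
      (((s : ℕ) : ZMod N) - ((s' : ℕ) : ZMod N)) *
        (((l : ℕ) : ZMod N) - ((l' : ℕ) : ZMod N)) = 0 := by
  refine ⟨p0.1, p2.1, q1.1, q3.1, ?_, ?_, by linear_combination -e1 + e2 - e3 + e4⟩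
  · intro hfst
    apply hp
    have : p0.2 = p2.2 := by rw [hfst] at e1; linear_combination e2 - e1
    exact Prod.ext hfst this
  · intro hfst
    apply hq
    have : q1.2 = q3.2 := by rw [hfst] at e2; linear_combination e2 - e3
    exact Prod.ext hfst this

lemma has_iff :
    hasFourCycle (tanner (Hm N n_c n_v)) ↔
      ∃ s s' : Fin n_c, ∃ l l' : Fin n_v, s ≠ s' ∧ l ≠ l' ∧
        (((s : ℕ) : ZMod N) - ((s' : ℕ) : ZMod N)) *
          (((l : ℕ) : ZMod N) - ((l' : ℕ) : ZMod N)) = 0 := by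
  constructor
  · rintro ⟨v, w, hcyc, hlen⟩
    cases w with
    | nil => simp at hlen
    | cons h1 w =>
    rename_i a1
    cases w with
    | nil => simp at hlen
    | cons h2 w =>
    rename_i a2
    cases w with
    | nil => simp at hlen
    | cons h3 w =>
    rename_i a3
    cases w with
    | nil => simp at hlen
    | cons h4 w =>
    cases w with
    | cons h5 w => simp at hlen
    | nil =>
    have hnd := hcyc.support_nodup
    simp only [SimpleGraph.Walk.support_cons, SimpleGraph.Walk.support_nil, List.tail_cons,
      List.nodup_cons, List.mem_cons, List.mem_singleton, List.not_mem_nil, List.nodup_nil,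
      and_true, not_or, not_false_eq_true] at hnd
    obtain ⟨⟨h12', h13', h1v⟩, ⟨h23', h2v⟩, h3v⟩ := hnd
    rw [adj_iff] at h1 h2 h3 h4
    rcases h1 with ⟨p0, q1, hv, ha1, e1⟩ | ⟨p0, q1, ha1, hv, e1⟩
    · -- v = inl p0, a1 = inr q1
      subst hv; subst ha1
      rcases h2 with ⟨p, q, hx, hy, _⟩ | ⟨p2, q, hx, hy, e2⟩
      · exact absurd hx (by simp)
      · subst hx
        rw [show q = q1 from (Sum.inr.inj hy).symm] at e2
        rcases h3 with ⟨p, q3, hx, hy, e3⟩ | ⟨p, q, hx, hy, _⟩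
        · subst hy
          rw [show p = p2 from (Sum.inl.inj hx).symm] at e3
          rcases h4 with ⟨p, q, hx, hy, _⟩ | ⟨p, q, hx, hy, e4⟩
          · exact absurd hx (by simp)
          · rw [show p = p0 from (Sum.inl.inj hx).symm,
              show q = q3 from (Sum.inr.inj hy).symm] at e4
            exact core p0 p2 q1 q3 (fun h => h2v (by rw [h])) (fun h => h13' (by rw [h]))
              e1 e2 e3 e4
        · exact absurd hy (by simp)
    · -- v = inr q1, a1 = inl p0
      subst hv; subst ha1
      rcases h2 with ⟨p, q2, hx, hy, e2⟩ | ⟨p, q, hx, hy, _⟩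
      · subst hy
        rw [show p = p0 from (Sum.inl.inj hx).symm] at e2
        rcases h3 with ⟨p, q, hx, hy, _⟩ | ⟨p2, q, hx, hy, e3⟩
        · exact absurd hx (by simp)
        · subst hx
          rw [show q = q2 from (Sum.inr.inj hy).symm] at e3
          rcases h4 with ⟨p, q, hx, hy, e4⟩ | ⟨p, q, hx, hy, _⟩
          · rw [show p = p2 from (Sum.inl.inj hx).symm,
              show q = q1 from (Sum.inr.inj hy).symm] at e4
            exact core p0 p2 q1 q2 (fun h => h13' (by rw [h])) (fun h => h2v (by rw [h]))
              e1 e4 e3 e2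
          · exact absurd hy (by simp)
      · exact absurd hy (by simp)
  · rintro ⟨s, s', l, l', hs, hl, h⟩
    exact cycle_of s s' l l' hs hl h

end MAux

theorem multiplicative_array_no_four_cycle (N n_c n_v : ℕ) [NeZero N] :
    let e : Fin n_c → Fin n_v → ZMod N := fun s l => ((s : ℕ) : ZMod N) * ((l : ℕ) : ZMod N)
    let H : (Fin n_c × ZMod N) → (Fin n_v × ZMod N) → ℕ :=
      fun p q => if q.2 = p.2 + e p.1 q.1 then 1 else 0
    ((¬ hasFourCycle (tanner H)) ↔
      ∀ s s' : Fin n_c, ∀ l l' : Fin n_v, s ≠ s' → l ≠ l' →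
        (((s : ℕ) : ZMod N) - ((s' : ℕ) : ZMod N)) *
          (((l : ℕ) : ZMod N) - ((l' : ℕ) : ZMod N)) ≠ 0) ∧
    (N.Prime → max n_c n_v ≤ N → ¬ hasFourCycle (tanner H)) := by
  intro e H
  have hH : tanner H = tanner (MAux.Hm N n_c n_v) := rfl
  rw [hH]
  constructor
  · rw [MAux.has_iff]
    push_neg
    rfl
  · intro hp hmax
    rw [MAux.has_iff]
    push_neg
    intro s s' l l' hs hl
    haveI := Fact.mk hp
    have hsc : ((s : ℕ) : ZMod N) ≠ ((s' : ℕ) : ZMod N) := by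
      intro h
      apply hs
      have hcN : n_c ≤ N := le_trans (le_max_left _ _) hmax
      have := (ZMod.natCast_eq_natCast_iff' _ _ _).mp h
      rw [Nat.mod_eq_of_lt (lt_of_lt_of_le s.2 hcN),
        Nat.mod_eq_of_lt (lt_of_lt_of_le s'.2 hcN)] at this
      exact Fin.ext this
    have hlc : ((l : ℕ) : ZMod N) ≠ ((l' : ℕ) : ZMod N) := by
      intro h
      apply hl
      have hvN : n_v ≤ N := le_trans (le_max_right _ _) hmax
      have := (ZMod.natCast_eq_natCast_iff' _ _ _).mp h
      rw [Nat.mod_eq_of_lt (lt_of_lt_of_le l.2 hvN),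
        Nat.mod_eq_of_lt (lt_of_lt_of_le l'.2 hvN)] at this
      exact Fin.ext this
    exact mul_ne_zero (sub_ne_zero_of_ne hsc) (sub_ne_zero_of_ne hlc)
end
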